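/- arXiv:1504.02955 — 5 statements merged into one kernel-verified Lean document; each statement's English description precedes it below -/
import Mathlib

section
/- For every n ≥ 1, the left limit of the duration process U at T_n equals S_n; that is, lim_{h→0⁺} U_{T_n − h} = T_n − T_{n−1} = S_n. -/
/-- For every `n ≥ 1`, the left limit of the duration process `U` at `T n` equals
`T n - T (n - 1) = S n`. -/
theorem duration_left_limit_at_jump_time {E : Type*} [Nonempty E]
    (Y : ℕ → E) (S T : ℕ → ℝ) (Z : ℝ → E) (U : ℝ → ℝ)
    (hY : ∀ n, Y (n + 1) ≠ Y n)
    (hS0 : S 0 = 0)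
    (hSpos : ∀ n, 1 ≤ n → 0 < S n)
    (hT : ∀ n, T n = ∑ k ∈ Finset.range (n + 1), S k)
    (hTtop : Filter.Tendsto T Filter.atTop Filter.atTop)
    (hZ : ∀ n, ∀ t : ℝ, T n ≤ t → t < T (n + 1) → Z t = Y n)
    (hU : ∀ t : ℝ, 0 ≤ t → U t = t - sSup {s : ℝ | 0 ≤ s ∧ s ≤ t ∧ Z s ≠ Z t}) :
    ∀ n, 1 ≤ n →
      Filter.Tendsto (fun h : ℝ => U (T n - h)) (nhdsWithin 0 (Set.Ioi 0))
        (nhds (T n - T (n - 1))) ∧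
      T n - T (n - 1) = S n := by
  have hSnn : ∀ k, 0 ≤ S k := by
    intro k
    rcases Nat.eq_zero_or_pos k with h | h
    · simp [h, hS0]
    · exact (hSpos k h).le
  have hTnn : ∀ k, 0 ≤ T k := by
    intro k
    rw [hT k]
    exact Finset.sum_nonneg fun i _ => hSnn i
  have hTsucc : ∀ k, T (k + 1) = T k + S (k + 1) := by
    intro k
    rw [hT (k + 1), hT k, Finset.sum_range_succ]
  have hTlt : ∀ k, T k < T (k + 1) := by
    intro k
    rw [hTsucc k]
    linarith [hSpos (k + 1) (Nat.le_add_left 1 k)]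
  have hT0 : T 0 = 0 := by rw [hT 0]; simp [hS0]
  -- key: on [T m, T (m+1)), U t = t - T m
  have key : ∀ m, ∀ t : ℝ, T m ≤ t → t < T (m + 1) → U t = t - T m := by
    intro m t htl htr
    have ht0 : (0 : ℝ) ≤ t := le_trans (hTnn m) htl
    have hZt : Z t = Y m := hZ m t htl htr
    have hsub : ∀ s : ℝ, 0 ≤ s → s ≤ t → Z s ≠ Z t → s < T m := by
      intro s hs0 hst hne
      by_contra hcon
      push_neg at hcon
      exact hne ((hZ m s hcon (lt_of_le_of_lt hst htr)).trans hZt.symm)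
    rw [hU t ht0]
    congr 1
    rcases Nat.eq_zero_or_pos m with hm0 | hm0
    · subst hm0
      have : {s : ℝ | 0 ≤ s ∧ s ≤ t ∧ Z s ≠ Z t} = ∅ := by
        ext s
        simp only [Set.mem_setOf_eq, Set.mem_empty_iff_false, iff_false]
        rintro ⟨hs0, hst, hne⟩
        exact absurd (hsub s hs0 hst hne) (by rw [hT0]; linarith)
      rw [this, Real.sSup_empty, hT0]
    · obtain ⟨k, rfl⟩ := Nat.exists_eq_succ_of_ne_zero (by omega : m ≠ 0)
      have hIco : Set.Ico (T k) (T (k + 1)) ⊆ {s : ℝ | 0 ≤ s ∧ s ≤ t ∧ Z s ≠ Z t} := by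
        rintro s ⟨h1, h2⟩
        refine ⟨le_trans (hTnn k) h1, le_trans h2.le htl, ?_⟩
        rw [hZ k s h1 h2, hZt]
        exact fun h => hY k h.symm
      have hbdd : BddAbove {s : ℝ | 0 ≤ s ∧ s ≤ t ∧ Z s ≠ Z t} :=
        ⟨T (k + 1), fun s hs => (hsub s hs.1 hs.2.1 hs.2.2).le⟩
      have hne : {s : ℝ | 0 ≤ s ∧ s ≤ t ∧ Z s ≠ Z t}.Nonempty :=
        ⟨T k, hIco ⟨le_refl _, hTlt k⟩⟩
      refine le_antisymm (csSup_le hne fun s hs => (hsub s hs.1 hs.2.1 hs.2.2).le) ?_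
      calc T (k + 1) = sSup (Set.Ico (T k) (T (k + 1))) := (csSup_Ico (hTlt k)).symm
        _ ≤ _ := csSup_le_csSup hbdd ⟨T k, le_refl _, hTlt k⟩ hIco
  intro n hn
  obtain ⟨m, rfl⟩ := Nat.exists_eq_succ_of_ne_zero (by omega : n ≠ 0)
  have hdiff : T (m + 1) - T (m + 1 - 1) = S (m + 1) := by
    simp only [Nat.add_sub_cancel]
    rw [hTsucc m]; ring
  refine ⟨?_, hdiff⟩
  have heq : (fun h : ℝ => U (T (m + 1) - h)) =ᶠ[nhdsWithin 0 (Set.Ioi 0)]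
      fun h : ℝ => T (m + 1) - h - T m := by
    filter_upwards [Ioo_mem_nhdsGT_of_mem (by
      constructor
      · exact le_refl (0 : ℝ)
      · linarith [hSpos (m + 1) (Nat.le_add_left 1 m)] : (0:ℝ) ∈ Set.Ico 0 (S (m+1)))]
      with h hh
    exact key m (T (m + 1) - h) (by rw [hTsucc m]; linarith [hh.2]) (by linarith [hh.1])
  have htend : Filter.Tendsto (fun h : ℝ => T (m + 1) - h - T m) (nhdsWithin 0 (Set.Ioi 0))
      (nhds (T (m + 1) - T (m + 1 - 1))) := by
    simp only [Nat.add_sub_cancel]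
    have h1 : Filter.Tendsto (fun h : ℝ => T (m + 1) - h - T m) (nhds 0)
        (nhds (T (m + 1) - 0 - T m)) :=
      (tendsto_const_nhds.sub Filter.tendsto_id).sub tendsto_const_nhds
    simpa using h1.mono_left nhdsWithin_le_nhds
  exact htend.congr' heq.symm
end

section
/- For all 0 ≤ s ≤ t with Z_s = Z_t, either U_t ≤ t − s or U_t = U_s + (t − s). (This is the pathwise content of the fact that the diagonal transition measure p_{ii}(s,t,u,·) is concentrated on [0, t−s] ∪ {u + t − s}.) -/
/-- If `0 ≤ s ≤ t` and `Z s = Z t`, then either `U t ≤ t - s` or `U t = U s + (t - s)`. -/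
theorem duration_dichotomy_on_diagonal {E : Type*} [Nonempty E]
    (Y : ℕ → E) (S T : ℕ → ℝ) (Z : ℝ → E) (U : ℝ → ℝ)
    (hY : ∀ n, Y (n + 1) ≠ Y n)
    (hS0 : S 0 = 0)
    (hSpos : ∀ n, 1 ≤ n → 0 < S n)
    (hT : ∀ n, T n = ∑ k ∈ Finset.range (n + 1), S k)
    (hTtop : Filter.Tendsto T Filter.atTop Filter.atTop)
    (hZ : ∀ n, ∀ t : ℝ, T n ≤ t → t < T (n + 1) → Z t = Y n)
    (hU : ∀ t : ℝ, 0 ≤ t → U t = t - sSup {s : ℝ | 0 ≤ s ∧ s ≤ t ∧ Z s ≠ Z t}) :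
    ∀ s t : ℝ, 0 ≤ s → s ≤ t → Z s = Z t →
      U t ≤ t - s ∨ U t = U s + (t - s) := by
  intro s t hs hst hZst
  rw [hU t (hs.trans hst), hU s hs]
  by_cases h : s ≤ sSup {r : ℝ | 0 ≤ r ∧ r ≤ t ∧ Z r ≠ Z t}
  · left; linarith
  · right
    push_neg at h
    have hset : {r : ℝ | 0 ≤ r ∧ r ≤ t ∧ Z r ≠ Z t}
        = {r : ℝ | 0 ≤ r ∧ r ≤ s ∧ Z r ≠ Z s} := by
      ext r
      constructor
      · rintro ⟨h0, h1, h2⟩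
        have hb : BddAbove {r : ℝ | 0 ≤ r ∧ r ≤ t ∧ Z r ≠ Z t} :=
          ⟨t, fun x hx => hx.2.1⟩
        have hle := le_csSup hb (Set.mem_setOf.mpr ⟨h0, h1, h2⟩)
        exact ⟨h0, le_of_lt (lt_of_le_of_lt hle h), by rwa [hZst]⟩
      · rintro ⟨h0, h1, h2⟩
        exact ⟨h0, h1.trans hst, by rwa [← hZst]⟩
    rw [hset]; ring
end

section
/- Let r, q_a, q_b : [0,∞)² → [0,∞) be Borel measurable, bounded on compact subsets of [0,∞)², and right-continuous. Then for every fixed (t,u) ∈ [0,∞)², lim_{h→0⁺} (1/h) ∫_t^{t+h} r(s, u+s−t) · exp(−∫_t^s q_a(v, u+v−t) dv) · exp(−∫_s^{t+h} q_b(v, v−s) dv) ds = r(t,u). (This is the analytic core of the proof that the intensities are the right derivatives of the transition probabilities: with r = q_{ij}, q_a = q_i, q_b = q_j, the integrand is the conditional density of making exactly one jump, from i to j, in (t, t+h].) -/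
/-!
Right-continuity of `r` at `(t, u)` makes `r(s, u + s - t)` close to `r(t, u)` for all
`s ∈ [t, t + h]` once `h` is small, and right-continuity of `qa` at `(t, u)` and of `qb` at
`(t, 0)` bounds them near these points, so both exponents are `O(h)` uniformly in `s`.
Hence the integrand tends to `r(t, u)` as `h → 0⁺`, uniformly in `s ∈ [t, t + h]`, and so does
its average over `[t, t + h]`; the integrand is measurable because the inner integrals depend
measurably on `s` (Fubini-Tonelli).
-/

open Filter Topology Set MeasureTheory

theorem abs_intervalIntegral_le_mul_sub {f : ℝ → ℝ} {a b M : ℝ} (hab : a ≤ b)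
    (hf : ∀ v ∈ Ioc a b, |f v| ≤ M) : |∫ v in a..b, f v| ≤ M * (b - a) := by
  have := intervalIntegral.norm_integral_le_of_norm_le_const (f := f) (C := M)
    fun v hv => hf v (by rwa [uIoc_of_le hab] at hv)
  rwa [Real.norm_eq_abs, abs_of_nonneg (sub_nonneg.2 hab)] at this

theorem measurable_intervalIntegral_of_uncurry {α : Type*} [MeasurableSpace α]
    {K : α → ℝ → ℝ} (hK : Measurable (Function.uncurry K)) {a b : α → ℝ}
    (ha : Measurable a) (hb : Measurable b) :
    Measurable fun s => ∫ v in a s..b s, K s v := by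
  have hIoc : ∀ {a b : α → ℝ}, Measurable a → Measurable b →
      Measurable fun s => ∫ v in Ioc (a s) (b s), K s v := by
    intro a b ha hb
    have hset : MeasurableSet {p : α × ℝ | a p.1 < p.2 ∧ p.2 ≤ b p.1} :=
      (measurableSet_lt (ha.comp measurable_fst) measurable_snd).inter
        (measurableSet_le measurable_snd (hb.comp measurable_fst))
    have := ((hK.indicator hset).stronglyMeasurable.integral_prod_right'
      (ν := (volume : Measure ℝ))).measurable
    convert this using 2 with s
    rw [← integral_indicator measurableSet_Ioc]
    congr 1 with v
  exact (hIoc ha hb).sub (hIoc hb ha)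

/-- Convergence along this filter is convergence as `h → 0⁺` uniformly in `s ∈ [t, t + h]`. -/
def rightIntervalFilter (t : ℝ) : Filter (ℝ × ℝ) :=
  comap Prod.fst (𝓝[>] 0) ⊓ 𝓟 {p | p.2 ∈ Icc t (t + p.1)}

theorem eventually_rightIntervalFilter_iff {t : ℝ} {P : ℝ × ℝ → Prop} :
    (∀ᶠ p in rightIntervalFilter t, P p) ↔
      ∀ᶠ h in 𝓝[>] 0, ∀ s ∈ Icc t (t + h), P (h, s) := by
  rw [rightIntervalFilter, eventually_inf_principal, eventually_comap]
  refine eventually_congr (Eventually.of_forall fun h => ?_)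
  exact ⟨fun H s hs => H (h, s) rfl hs, fun H p hp => by subst hp; exact H p.2⟩

theorem tendsto_fst_rightIntervalFilter (t : ℝ) :
    Tendsto Prod.fst (rightIntervalFilter t) (𝓝 0) :=
  (tendsto_comap.mono_left inf_le_left).mono_right nhdsWithin_le_nhds

theorem tendsto_zero_of_abs_le_mul_fst {t M : ℝ} {e : ℝ × ℝ → ℝ}
    (he : ∀ᶠ p in rightIntervalFilter t, |e p| ≤ M * p.1) :
    Tendsto e (rightIntervalFilter t) (𝓝 0) := by
  refine squeeze_zero_norm' he ?_
  simpa using (tendsto_fst_rightIntervalFilter t).const_mul M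

theorem tendsto_average_of_tendsto_rightIntervalFilter {F : ℝ → ℝ → ℝ} {t c : ℝ}
    (hmeas : ∀ h, AEStronglyMeasurable (F h))
    (hF : Tendsto (fun p : ℝ × ℝ => F p.1 p.2) (rightIntervalFilter t) (𝓝 c)) :
    Tendsto (fun h => (1 / h) * ∫ s in t..(t + h), F h s) (𝓝[>] 0) (𝓝 c) := by
  refine Metric.tendsto_nhds.2 fun ε hε => ?_
  have hclose := eventually_rightIntervalFilter_iff.1
    (Metric.tendsto_nhds.1 hF (ε / 2) (half_pos hε))
  filter_upwards [hclose, self_mem_nhdsWithin] with h hh (hpos : 0 < h)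
  have hbound : ∀ s ∈ Ioc t (t + h), ‖F h s - c‖ ≤ ε / 2 := fun s hs =>
    (hh s (Ioc_subset_Icc_self hs)).le
  have hint : IntervalIntegrable (F h) volume t (t + h) := by
    rw [intervalIntegrable_iff_integrableOn_Ioc_of_le (by linarith)]
    refine Measure.integrableOn_of_bounded (M := ‖c‖ + ε / 2) measure_Ioc_lt_top.ne
      (hmeas h) ?_
    filter_upwards [ae_restrict_mem measurableSet_Ioc] with s hs
    linarith [norm_le_norm_add_norm_sub' (F h s) c, hbound s hs]
  have hdev : ‖∫ s in t..(t + h), (F h s - c)‖ ≤ ε / 2 * h := by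
    have := intervalIntegral.norm_integral_le_of_norm_le_const
      (fun s hs => hbound s (by rwa [uIoc_of_le (by linarith : t ≤ t + h)] at hs))
    rwa [add_sub_cancel_left, abs_of_pos hpos] at this
  rw [intervalIntegral.integral_sub hint intervalIntegrable_const,
    intervalIntegral.integral_const, add_sub_cancel_left, smul_eq_mul] at hdev
  have hrewrite : 1 / h * (∫ s in t..(t + h), F h s) - c =
      ((∫ s in t..(t + h), F h s) - h * c) / h := by
    field_simp
  rw [dist_eq_norm, hrewrite, norm_div, Real.norm_of_nonneg hpos.le, div_lt_iff₀ hpos]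
  linarith [mul_lt_mul_of_pos_right (half_lt_self hε) hpos]

def QuadrantRightContinuousAt (q : ℝ → ℝ → ℝ) (t u : ℝ) : Prop :=
  ∀ ε : ℝ, 0 < ε → ∃ δ : ℝ, 0 < δ ∧
    ∀ h k : ℝ, 0 ≤ h → h < δ → 0 ≤ k → k < δ → |q (t + h) (u + k) - q t u| < ε

namespace QuadrantRightContinuousAt

variable {q : ℝ → ℝ → ℝ} {t u : ℝ}

theorem eventually_abs_sub_lt (hq : QuadrantRightContinuousAt q t u) {ε : ℝ} (hε : 0 < ε) :
    ∀ᶠ h in 𝓝[>] (0 : ℝ),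
      ∀ x ∈ Icc t (t + h), ∀ y ∈ Icc u (u + h), |q x y - q t u| < ε := by
  obtain ⟨δ, hδ, hq⟩ := hq ε hε
  filter_upwards [nhdsWithin_le_nhds (eventually_lt_nhds hδ)] with h hh x hx y hy
  simpa using hq (x - t) (y - u) (by linarith [hx.1]) (by linarith [hx.2])
    (by linarith [hy.1]) (by linarith [hy.2])

theorem eventually_abs_le (hq : QuadrantRightContinuousAt q t u) :
    ∀ᶠ h in 𝓝[>] (0 : ℝ),
      ∀ x ∈ Icc t (t + h), ∀ y ∈ Icc u (u + h), |q x y| ≤ |q t u| + 1 := by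
  filter_upwards [hq.eventually_abs_sub_lt one_pos] with h hh x hx y hy
  linarith [abs_sub_abs_le_abs_sub (q x y) (q t u), hh x hx y hy]

theorem tendsto_rightIntervalFilter (hq : QuadrantRightContinuousAt q t u) :
    Tendsto (fun p : ℝ × ℝ => q p.2 (u + p.2 - t)) (rightIntervalFilter t) (𝓝 (q t u)) := by
  refine Metric.tendsto_nhds.2 fun ε hε => eventually_rightIntervalFilter_iff.2 ?_
  filter_upwards [hq.eventually_abs_sub_lt hε] with h hh s hs
  exact hh s hs _ ⟨by linarith [hs.1], by linarith [hs.2]⟩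

theorem tendsto_intervalIntegral_diagonal (hq : QuadrantRightContinuousAt q t u) :
    Tendsto (fun p : ℝ × ℝ => ∫ v in t..p.2, q v (u + v - t)) (rightIntervalFilter t)
      (𝓝 0) := by
  refine tendsto_zero_of_abs_le_mul_fst (M := |q t u| + 1)
    (eventually_rightIntervalFilter_iff.2 ?_)
  filter_upwards [hq.eventually_abs_le] with h hh s hs
  refine (abs_intervalIntegral_le_mul_sub hs.1 fun v hv => ?_).trans
    (mul_le_mul_of_nonneg_left (by linarith [hs.2]) (by positivity))
  exact hh v ⟨hv.1.le, hv.2.trans hs.2⟩ _ ⟨by linarith [hv.1], by linarith [hv.2, hs.2]⟩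

theorem tendsto_intervalIntegral_elapsed (hq : QuadrantRightContinuousAt q t 0) :
    Tendsto (fun p : ℝ × ℝ => ∫ v in p.2..(t + p.1), q v (v - p.2)) (rightIntervalFilter t)
      (𝓝 0) := by
  refine tendsto_zero_of_abs_le_mul_fst (M := |q t 0| + 1)
    (eventually_rightIntervalFilter_iff.2 ?_)
  filter_upwards [hq.eventually_abs_le] with h hh s hs
  refine (abs_intervalIntegral_le_mul_sub hs.2 fun v hv => ?_).trans
    (mul_le_mul_of_nonneg_left (by linarith [hs.1]) (by positivity))
  exact hh v ⟨hs.1.trans hv.1.le, hv.2⟩ _ ⟨by linarith [hv.1], by linarith [hv.2, hs.1]⟩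

end QuadrantRightContinuousAt

theorem one_jump_density_right_derivative_general
    (r qa qb : ℝ → ℝ → ℝ)
    (hrmeas : Measurable fun p : ℝ × ℝ => r p.1 p.2)
    (hqameas : Measurable fun p : ℝ × ℝ => qa p.1 p.2)
    (hqbmeas : Measurable fun p : ℝ × ℝ => qb p.1 p.2)
    (hrrc : ∀ t u : ℝ, 0 ≤ t → 0 ≤ u → ∀ ε : ℝ, 0 < ε → ∃ δ : ℝ, 0 < δ ∧
      ∀ h k : ℝ, 0 ≤ h → h < δ → 0 ≤ k → k < δ → |r (t + h) (u + k) - r t u| < ε)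
    (hqarc : ∀ t u : ℝ, 0 ≤ t → 0 ≤ u → ∀ ε : ℝ, 0 < ε → ∃ δ : ℝ, 0 < δ ∧
      ∀ h k : ℝ, 0 ≤ h → h < δ → 0 ≤ k → k < δ → |qa (t + h) (u + k) - qa t u| < ε)
    (hqbrc : ∀ t u : ℝ, 0 ≤ t → 0 ≤ u → ∀ ε : ℝ, 0 < ε → ∃ δ : ℝ, 0 < δ ∧
      ∀ h k : ℝ, 0 ≤ h → h < δ → 0 ≤ k → k < δ → |qb (t + h) (u + k) - qb t u| < ε)
    (t u : ℝ) (ht : 0 ≤ t) (hu : 0 ≤ u) :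
    Filter.Tendsto (fun h : ℝ => (1 / h) *
        ∫ s in t..(t + h), r s (u + s - t)
          * Real.exp (-∫ v in t..s, qa v (u + v - t))
          * Real.exp (-∫ v in s..(t + h), qb v (v - s)))
      (nhdsWithin 0 (Set.Ioi 0)) (nhds (r t u)) := by
  have hr : QuadrantRightContinuousAt r t u := hrrc t u ht hu
  have hqa : QuadrantRightContinuousAt qa t u := hqarc t u ht hu
  have hqb : QuadrantRightContinuousAt qb t 0 := hqbrc t 0 ht le_rfl
  refine tendsto_average_of_tendsto_rightIntervalFilter (fun h => ?_) ?_
  · have hA := measurable_intervalIntegral_of_uncurry (K := fun _ v => qa v (u + v - t))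
      (hqameas.comp (f := fun p : ℝ × ℝ => (p.2, u + p.2 - t)) (by fun_prop))
      (measurable_const (a := t)) measurable_id
    have hB := measurable_intervalIntegral_of_uncurry (K := fun s v => qb v (v - s))
      (hqbmeas.comp (f := fun p : ℝ × ℝ => (p.2, p.2 - p.1)) (by fun_prop))
      measurable_id (measurable_const (a := t + h))
    have hR := hrmeas.comp (f := fun s : ℝ => (s, u + s - t)) (by fun_prop)
    exact ((hR.mul hA.neg.exp).mul hB.neg.exp).aestronglyMeasurable
  · simpa using (hr.tendsto_rightIntervalFilter.mul
      hqa.tendsto_intervalIntegral_diagonal.neg.rexp).mul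
      hqb.tendsto_intervalIntegral_elapsed.neg.rexp

/-- Let `r, qa, qb : [0,∞)² → [0,∞)` be Borel measurable, bounded on compact subsets of
`[0,∞)²` and right-continuous. Then for every `(t,u) ∈ [0,∞)²`,
`(1/h) ∫_t^{t+h} r(s, u+s-t) exp(-∫_t^s qa(v, u+v-t) dv) exp(-∫_s^{t+h} qb(v, v-s) dv) ds`
tends to `r(t,u)` as `h → 0⁺`. -/
theorem one_jump_density_right_derivative
    (r qa qb : ℝ → ℝ → ℝ)
    (hrmeas : Measurable fun p : ℝ × ℝ => r p.1 p.2)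
    (hqameas : Measurable fun p : ℝ × ℝ => qa p.1 p.2)
    (hqbmeas : Measurable fun p : ℝ × ℝ => qb p.1 p.2)
    (hrnonneg : ∀ t u : ℝ, 0 ≤ t → 0 ≤ u → 0 ≤ r t u)
    (hqanonneg : ∀ t u : ℝ, 0 ≤ t → 0 ≤ u → 0 ≤ qa t u)
    (hqbnonneg : ∀ t u : ℝ, 0 ≤ t → 0 ≤ u → 0 ≤ qb t u)
    (hrbdd : ∀ K : Set (ℝ × ℝ), IsCompact K →
      ∃ M : ℝ, ∀ p ∈ K, 0 ≤ p.1 → 0 ≤ p.2 → r p.1 p.2 ≤ M)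
    (hqabdd : ∀ K : Set (ℝ × ℝ), IsCompact K →
      ∃ M : ℝ, ∀ p ∈ K, 0 ≤ p.1 → 0 ≤ p.2 → qa p.1 p.2 ≤ M)
    (hqbbdd : ∀ K : Set (ℝ × ℝ), IsCompact K →
      ∃ M : ℝ, ∀ p ∈ K, 0 ≤ p.1 → 0 ≤ p.2 → qb p.1 p.2 ≤ M)
    (hrrc : ∀ t u : ℝ, 0 ≤ t → 0 ≤ u → ∀ ε : ℝ, 0 < ε → ∃ δ : ℝ, 0 < δ ∧
      ∀ h k : ℝ, 0 ≤ h → h < δ → 0 ≤ k → k < δ → |r (t + h) (u + k) - r t u| < ε)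
    (hqarc : ∀ t u : ℝ, 0 ≤ t → 0 ≤ u → ∀ ε : ℝ, 0 < ε → ∃ δ : ℝ, 0 < δ ∧
      ∀ h k : ℝ, 0 ≤ h → h < δ → 0 ≤ k → k < δ → |qa (t + h) (u + k) - qa t u| < ε)
    (hqbrc : ∀ t u : ℝ, 0 ≤ t → 0 ≤ u → ∀ ε : ℝ, 0 < ε → ∃ δ : ℝ, 0 < δ ∧
      ∀ h k : ℝ, 0 ≤ h → h < δ → 0 ≤ k → k < δ → |qb (t + h) (u + k) - qb t u| < ε)
    (t u : ℝ) (ht : 0 ≤ t) (hu : 0 ≤ u) :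
    Filter.Tendsto (fun h : ℝ => (1 / h) *
        ∫ s in t..(t + h), r s (u + s - t)
          * Real.exp (-∫ v in t..s, qa v (u + v - t))
          * Real.exp (-∫ v in s..(t + h), qb v (v - s)))
      (nhdsWithin 0 (Set.Ioi 0)) (nhds (r t u)) :=
  one_jump_density_right_derivative_general r qa qb hrmeas hqameas hqbmeas hrrc hqarc hqbrc t u ht
    hu
end

section
/- If X and W are conditionally independent given the σ-algebra generated by V, then X and W are conditionally independent given the σ-algebra generated by the pair (V, f∘W). -/
/-!
Write `𝓥 = σ(V)` and `𝓦 = σ(W)`. Given `X ⟂ W | 𝓥`, the conditional probability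
`P(X ∈ A | 𝓥)` is also a version of `P(X ∈ A | 𝓥 ⊔ 𝓦)`: the two set integrals agree on the
π-system of sets `B ∩ C` with `B ∈ 𝓥`, `C ∈ 𝓦`, by pulling `1_C` out of `P(· | 𝓥)` and using the
factorisation. Since `𝓥 ≤ σ(V, f ∘ W) ≤ 𝓥 ⊔ 𝓦`, the tower property then gives
`P(X ∈ A, W ∈ C | σ(V, f ∘ W)) = P(X ∈ A | 𝓥) P(W ∈ C | σ(V, f ∘ W))`, and
`P(X ∈ A | 𝓥) = P(X ∈ A | σ(V, f ∘ W))`. This is the weak union rule for conditional independence.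
-/

open MeasureTheory ProbabilityTheory Filter

namespace MeasurableSpace

variable {Ω : Type*}

lemma sup_eq_generateFrom_inter (m₁ m₂ : MeasurableSpace Ω) :
    m₁ ⊔ m₂ = MeasurableSpace.generateFrom
      (Set.image2 (· ∩ ·) {s | MeasurableSet[m₁] s} {t | MeasurableSet[m₂] t}) := by
  refine le_antisymm (sup_le ?_ ?_) (MeasurableSpace.generateFrom_le ?_)
  · exact fun s hs ↦ MeasurableSpace.measurableSet_generateFrom
      ⟨s, hs, Set.univ, MeasurableSet.univ, Set.inter_univ s⟩
  · exact fun t ht ↦ MeasurableSpace.measurableSet_generateFrom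
      ⟨Set.univ, MeasurableSet.univ, t, ht, Set.univ_inter t⟩
  · rintro _ ⟨s, hs, t, ht, rfl⟩
    exact (le_sup_left (b := m₂) s hs).inter (le_sup_right (a := m₁) t ht)

lemma isPiSystem_image2_inter (m₁ m₂ : MeasurableSpace Ω) :
    IsPiSystem (Set.image2 (· ∩ ·) {s | MeasurableSet[m₁] s} {t | MeasurableSet[m₂] t}) := by
  rintro _ ⟨s₁, hs₁, t₁, ht₁, rfl⟩ _ ⟨s₂, hs₂, t₂, ht₂, rfl⟩ -
  exact ⟨s₁ ∩ s₂, hs₁.inter hs₂, t₁ ∩ t₂, ht₁.inter ht₂, Set.inter_inter_inter_comm _ _ _ _⟩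

end MeasurableSpace

namespace MeasureTheory

variable {Ω : Type*}

section PiSystem

variable {E : Type*} [NormedAddCommGroup E] [NormedSpace ℝ E]
  {m m₀ : MeasurableSpace Ω} {μ : Measure Ω}

lemma setIntegral_eq_of_isPiSystem (hm : m ≤ m₀) {C : Set (Set Ω)}
    (hC_gen : m = MeasurableSpace.generateFrom C) (hC : IsPiSystem C) {f g : Ω → E}
    (hf : Integrable f μ) (hg : Integrable g μ) (h_univ : ∫ x, f x ∂μ = ∫ x, g x ∂μ)
    (h_basic : ∀ u ∈ C, ∫ x in u, f x ∂μ = ∫ x in u, g x ∂μ) {u : Set Ω}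
    (hu : MeasurableSet[m] u) : ∫ x in u, f x ∂μ = ∫ x in u, g x ∂μ := by
  induction u, hu using MeasurableSpace.induction_on_inter hC_gen hC with
  | empty => simp
  | basic u hu => exact h_basic u hu
  | compl u hu ih =>
    have hf_add := integral_add_compl (hm u hu) hf
    have hg_add := integral_add_compl (hm u hu) hg
    rw [ih, h_univ, ← hg_add] at hf_add
    exact add_left_cancel hf_add
  | iUnion u hu_disj hu ih =>
    rw [integral_iUnion (fun i ↦ hm _ (hu i)) hu_disj hf.integrableOn,
      integral_iUnion (fun i ↦ hm _ (hu i)) hu_disj hg.integrableOn]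
    exact tsum_congr ih

end PiSystem

section CondExp

variable {m mΩ : MeasurableSpace Ω} {μ : Measure Ω} [IsFiniteMeasure μ]

lemma condExp_indicator_eq_mul_condExp_indicator_one {g : Ω → ℝ} (hg : StronglyMeasurable[m] g)
    (hg_int : Integrable g μ) {t : Set Ω} (ht : MeasurableSet t) :
    μ[t.indicator g | m] =ᵐ[μ] g * μ⟦t | m⟧ := by
  have h_mul : t.indicator g = g * t.indicator 1 := by
    ext ω
    by_cases hω : ω ∈ t <;> simp [hω]
  rw [h_mul]
  exact condExp_mul_of_stronglyMeasurable_left hg (h_mul ▸ hg_int.indicator ht)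
    ((integrable_const 1).indicator ht)

end CondExp

end MeasureTheory

namespace ProbabilityTheory

variable {Ω : Type*} {m m' m₁ m₂ mΩ : MeasurableSpace Ω} [StandardBorelSpace Ω]
  {μ : Measure Ω} [IsFiniteMeasure μ]

lemma CondIndep.condExp_indicator_sup_eq (hm : m ≤ mΩ) (hm₁ : m₁ ≤ mΩ)
    (hm₂ : m₂ ≤ mΩ) (h : CondIndep m m₁ m₂ hm μ) {s : Set Ω} (hs : MeasurableSet[m₁] s) :
    μ⟦s | m ⊔ m₂⟧ =ᵐ[μ] μ⟦s | m⟧ := by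
  have hs_int : Integrable (s.indicator fun _ ↦ (1 : ℝ)) μ :=
    (integrable_const 1).indicator (hm₁ s hs)
  have h_meas : StronglyMeasurable[m ⊔ m₂] (μ⟦s | m⟧) :=
    stronglyMeasurable_condExp.mono le_sup_left
  refine (ae_eq_condExp_of_forall_setIntegral_eq (sup_le hm hm₂) hs_int
    (fun _ _ _ ↦ integrable_condExp.integrableOn) (fun u hu _ ↦ ?_)
    h_meas.aestronglyMeasurable).symm
  refine setIntegral_eq_of_isPiSystem (sup_le hm hm₂)
    (MeasurableSpace.sup_eq_generateFrom_inter m m₂) (MeasurableSpace.isPiSystem_image2_inter m m₂)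
    integrable_condExp hs_int (integral_condExp hm) ?_ hu
  rintro _ ⟨a, ha, b, hb, rfl⟩
  have hb' : MeasurableSet b := hm₂ b hb
  have h_prod : μ[b.indicator (μ⟦s | m⟧) | m] =ᵐ[μ] μ⟦s ∩ b | m⟧ := by
    filter_upwards [condExp_indicator_eq_mul_condExp_indicator_one stronglyMeasurable_condExp
      integrable_condExp hb', (condIndep_iff m m₁ m₂ hm hm₁ hm₂ μ).1 h s b hs hb] with x h₁ h₂
    rw [h₁, h₂]
  calc ∫ x in a ∩ b, (μ⟦s | m⟧) x ∂μ
      = ∫ x in a, b.indicator (μ⟦s | m⟧) x ∂μ := (setIntegral_indicator hb').symm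
    _ = ∫ x in a, μ[b.indicator (μ⟦s | m⟧) | m] x ∂μ :=
      (setIntegral_condExp hm (integrable_condExp.indicator hb') ha).symm
    _ = ∫ x in a, (μ⟦s ∩ b | m⟧) x ∂μ := setIntegral_congr_ae (hm a ha) (h_prod.mono fun _ h _ ↦ h)
    _ = ∫ x in a, (s ∩ b).indicator (fun _ ↦ (1 : ℝ)) x ∂μ :=
      setIntegral_condExp hm ((integrable_const 1).indicator ((hm₁ s hs).inter hb')) ha
    _ = ∫ x in a ∩ b, s.indicator (fun _ ↦ (1 : ℝ)) x ∂μ := by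
      rw [Set.inter_comm s b, ← Set.indicator_indicator, setIntegral_indicator hb']

lemma CondIndep.condExp_indicator_eq_of_le_of_le_sup
    (hm : m ≤ mΩ) (hm₁ : m₁ ≤ mΩ) (hm₂ : m₂ ≤ mΩ) (h : CondIndep m m₁ m₂ hm μ)
    (h_le : m ≤ m') (h_sup : m' ≤ m ⊔ m₂) {s : Set Ω} (hs : MeasurableSet[m₁] s) :
    μ⟦s | m'⟧ =ᵐ[μ] μ⟦s | m⟧ := by
  have hm' : m' ≤ mΩ := h_sup.trans (sup_le hm hm₂)
  calc μ⟦s | m'⟧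
      =ᵐ[μ] μ[μ⟦s | m ⊔ m₂⟧ | m'] := (condExp_condExp_of_le h_sup (sup_le hm hm₂)).symm
    _ =ᵐ[μ] μ[μ⟦s | m⟧ | m'] := condExp_congr_ae (h.condExp_indicator_sup_eq hm hm₁ hm₂ hs)
    _ = μ⟦s | m⟧ :=
      condExp_of_stronglyMeasurable hm' (stronglyMeasurable_condExp.mono h_le) integrable_condExp

lemma CondIndep.of_le_of_le_sup
    (hm : m ≤ mΩ) (hm₁ : m₁ ≤ mΩ) (hm₂ : m₂ ≤ mΩ) (h : CondIndep m m₁ m₂ hm μ)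
    (h_le : m ≤ m') (h_sup : m' ≤ m ⊔ m₂) :
    CondIndep m' m₁ m₂ (h_sup.trans (sup_le hm hm₂)) μ := by
  rw [condIndep_iff _ _ _ _ hm₁ hm₂]
  intro s t hs ht
  have ht' : MeasurableSet t := hm₂ t ht
  have h_inter : (s ∩ t).indicator (fun _ ↦ (1 : ℝ)) = t.indicator (s.indicator fun _ ↦ 1) := by
    rw [Set.indicator_indicator, Set.inter_comm]
  calc μ⟦s ∩ t | m'⟧
      =ᵐ[μ] μ[μ⟦s ∩ t | m ⊔ m₂⟧ | m'] := (condExp_condExp_of_le h_sup (sup_le hm hm₂)).symm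
    _ =ᵐ[μ] μ[t.indicator (μ⟦s | m ⊔ m₂⟧) | m'] := condExp_congr_ae <| h_inter ▸
      condExp_indicator ((integrable_const 1).indicator (hm₁ s hs)) (le_sup_right (a := m) t ht)
    _ =ᵐ[μ] μ[t.indicator (μ⟦s | m⟧) | m'] :=
      condExp_congr_ae ((h.condExp_indicator_sup_eq hm hm₁ hm₂ hs).indicator)
    _ =ᵐ[μ] μ⟦s | m⟧ * μ⟦t | m'⟧ := condExp_indicator_eq_mul_condExp_indicator_one
      (stronglyMeasurable_condExp.mono h_le) integrable_condExp ht'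
    _ =ᵐ[μ] μ⟦s | m'⟧ * μ⟦t | m'⟧ :=
      (h.condExp_indicator_eq_of_le_of_le_sup hm hm₁ hm₂ h_le h_sup hs).symm.mul EventuallyEq.rfl

lemma CondIndepFun.of_le_of_le_sup {β γ : Type*} [MeasurableSpace β]
    [mγ : MeasurableSpace γ] {f : Ω → β} {g : Ω → γ}
    (hf : Measurable f) (hg : Measurable g) (hm : m ≤ mΩ) (h : CondIndepFun m hm f g μ)
    (h_le : m ≤ m') (h_sup : m' ≤ m ⊔ mγ.comap g) :
    CondIndepFun m' (h_sup.trans (sup_le hm hg.comap_le)) f g μ :=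
  (condIndepFun_iff_condIndep _ _ _ _ _).2 <|
    ((condIndepFun_iff_condIndep _ _ _ _ _).1 h).of_le_of_le_sup hm hf.comap_le hg.comap_le
      h_le h_sup

end ProbabilityTheory

theorem condIndepFun_of_condIndepFun_comap_pair_of_map_general
    {Ω 𝒳 𝒲 𝒱 𝒰 : Type*}
    [MeasurableSpace Ω] [StandardBorelSpace Ω]
    [MeasurableSpace 𝒳] [MeasurableSpace 𝒲] [MeasurableSpace 𝒱] [MeasurableSpace 𝒰]
    (μ : Measure Ω) [IsProbabilityMeasure μ]
    (X : Ω → 𝒳) (W : Ω → 𝒲) (V : Ω → 𝒱) (f : 𝒲 → 𝒰)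
    (hX : Measurable X) (hW : Measurable W) (hV : Measurable V) (hf : Measurable f)
    (h : CondIndepFun (MeasurableSpace.comap V inferInstance) hV.comap_le X W μ) :
    CondIndepFun (MeasurableSpace.comap (fun ω => (V ω, f (W ω))) inferInstance)
      (Measurable.comap_le (hV.prodMk (hf.comp hW))) X W μ := by
  have h_le : MeasurableSpace.comap V inferInstance
      ≤ MeasurableSpace.comap (fun ω => (V ω, f (W ω))) inferInstance :=
    (measurable_fst.comp (comap_measurable (fun ω => (V ω, f (W ω))))).comap_le
  have h_sup : MeasurableSpace.comap (fun ω => (V ω, f (W ω))) inferInstance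
      ≤ MeasurableSpace.comap V inferInstance ⊔ MeasurableSpace.comap W inferInstance :=
    (((comap_measurable V).mono le_sup_left le_rfl).prodMk
      (hf.comp ((comap_measurable W).mono le_sup_right le_rfl))).comap_le
  exact h.of_le_of_le_sup hX hW hV.comap_le h_le h_sup

/-- If `X` and `W` are conditionally independent given the σ-algebra generated by `V`,
then `X` and `W` are conditionally independent given the σ-algebra generated by the
pair `(V, f ∘ W)`. -/
theorem condIndepFun_of_condIndepFun_comap_pair_of_map
    {Ω 𝒳 𝒲 𝒱 𝒰 : Type*}
    [MeasurableSpace Ω] [StandardBorelSpace Ω] [Nonempty Ω]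
    [MeasurableSpace 𝒳] [StandardBorelSpace 𝒳]
    [MeasurableSpace 𝒲] [StandardBorelSpace 𝒲]
    [MeasurableSpace 𝒱] [StandardBorelSpace 𝒱]
    [MeasurableSpace 𝒰] [StandardBorelSpace 𝒰]
    (μ : Measure Ω) [IsProbabilityMeasure μ]
    (X : Ω → 𝒳) (W : Ω → 𝒲) (V : Ω → 𝒱) (f : 𝒲 → 𝒰)
    (hX : Measurable X) (hW : Measurable W) (hV : Measurable V) (hf : Measurable f)
    (h : CondIndepFun (MeasurableSpace.comap V inferInstance) hV.comap_le X W μ) :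
    CondIndepFun (MeasurableSpace.comap (fun ω => (V ω, f (W ω))) inferInstance)
      (Measurable.comap_le (hV.prodMk (hf.comp hW))) X W μ :=
  condIndepFun_of_condIndepFun_comap_pair_of_map_general μ X W V f hX hW hV hf h
end

section
/- The first event time strictly after a stopping time is a stopping time: the map T(S) : Ω → [0,∞] defined by T(S)(ω) = inf{T_n(ω) : n ≥ 0, T_n(ω) > S(ω)}, with the convention inf ∅ = ∞, is a stopping time with respect to (ℱ_t)_{t≥0}. -/
open MeasureTheory
open scoped NNReal ENNReal

/-- The first event time strictly after a stopping time is a stopping time: given a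
filtration `F` indexed by `[0,∞)`, a nondecreasing sequence of `[0,∞]`-valued stopping
times `(T n)` and a `[0,∞]`-valued stopping time `S`, the map
`ω ↦ inf {T n ω : T n ω > S ω}` (with `inf ∅ = ∞`) is again a stopping time. -/
theorem first_event_after_stopping_time_is_stopping_time
    {Ω : Type*} [MeasurableSpace Ω]
    (F : ℝ≥0 → MeasurableSpace Ω)
    (hF_mono : Monotone F)
    (hF_le : ∀ t : ℝ≥0, F t ≤ (inferInstance : MeasurableSpace Ω))
    (T : ℕ → Ω → ℝ≥0∞)
    (hT_mono : ∀ n (ω : Ω), T n ω ≤ T (n + 1) ω)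
    (hT_st : ∀ n (t : ℝ≥0), MeasurableSet[F t] {ω | T n ω ≤ (t : ℝ≥0∞)})
    (S : Ω → ℝ≥0∞)
    (hS_st : ∀ t : ℝ≥0, MeasurableSet[F t] {ω | S ω ≤ (t : ℝ≥0∞)}) :
    ∀ t : ℝ≥0,
      MeasurableSet[F t]
        {ω | sInf {x : ℝ≥0∞ | ∃ n, x = T n ω ∧ S ω < x} ≤ (t : ℝ≥0∞)} := by
  intro t
  classical
  have key : {ω | sInf {x : ℝ≥0∞ | ∃ n, x = T n ω ∧ S ω < x} ≤ (t : ℝ≥0∞)}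
      = ⋃ n, ⋃ q : ℚ, ⋃ (_ : Real.toNNReal q ≤ t),
          (({ω | S ω ≤ ((Real.toNNReal q : ℝ≥0) : ℝ≥0∞)}
            ∩ {ω | T n ω ≤ ((Real.toNNReal q : ℝ≥0) : ℝ≥0∞)}ᶜ)
            ∩ {ω | T n ω ≤ (t : ℝ≥0∞)}) := by
    ext ω
    simp only [Set.mem_setOf_eq, Set.mem_iUnion, Set.mem_inter_iff, Set.mem_compl_iff]
    constructor
    · intro h
      by_cases hA : ∃ m, S ω < T m ω
      · have hTm : Monotone (fun n => T n ω) :=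
          monotone_nat_of_le_succ (fun n => hT_mono n ω)
        set n0 := Nat.find hA with hn0
        have hSn0 : S ω < T n0 ω := Nat.find_spec hA
        have hlb : ∀ x ∈ {x : ℝ≥0∞ | ∃ n, x = T n ω ∧ S ω < x}, T n0 ω ≤ x := by
          rintro x ⟨m, rfl, hm⟩
          rcases lt_or_ge m n0 with hmn | hmn
          · exact absurd hm (Nat.find_min hA hmn)
          · exact hTm hmn
        have hinf : sInf {x : ℝ≥0∞ | ∃ n, x = T n ω ∧ S ω < x} = T n0 ω :=
          le_antisymm (sInf_le ⟨n0, rfl, hSn0⟩) (le_sInf hlb)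
        rw [hinf] at h
        obtain ⟨q, hq0, hSq, hqT⟩ := ENNReal.lt_iff_exists_rat_btwn.1 hSn0
        refine ⟨n0, q, ?_, ⟨hSq.le, not_le.2 hqT⟩, h⟩
        have : ((Real.toNNReal q : ℝ≥0) : ℝ≥0∞) ≤ (t : ℝ≥0∞) := hqT.le.trans h
        exact_mod_cast this
      · exfalso
        push_neg at hA
        have : {x : ℝ≥0∞ | ∃ n, x = T n ω ∧ S ω < x} = ∅ := by
          ext x
          simp only [Set.mem_setOf_eq, Set.mem_empty_iff_false, iff_false]
          rintro ⟨n, rfl, hx⟩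
          exact absurd hx (not_lt.2 (hA n))
        rw [this, sInf_empty] at h
        exact absurd h (by simp)
    · rintro ⟨n, q, hqt, ⟨hSq, hqT⟩, hTt⟩
      rw [not_le] at hqT
      have : T n ω ∈ {x : ℝ≥0∞ | ∃ n, x = T n ω ∧ S ω < x} :=
        ⟨n, rfl, lt_of_le_of_lt hSq hqT⟩
      exact (sInf_le this).trans hTt
  rw [key]
  refine MeasurableSet.iUnion fun n => MeasurableSet.iUnion fun q =>
    MeasurableSet.iUnion fun hq => ?_
  exact ((hF_mono hq _ (hS_st _)).inter ((hF_mono hq _ (hT_st n _)).compl)).inter (hT_st n t)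
end
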